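/- Let X, Y be 2n×2n real matrices with Y symmetric, Σ := σ_{2n} - X^T σ_{2n} X, and Y - iΣ positive semidefinite. For θ > 1 let γ'(θ) be the 4n×4n matrix [[θ X^T X + Y, f(θ) X^T σ_x],[f(θ) σ_x X, θ I_{2n}]] with f(θ) = -√(θ²-1) and σ_x = [[0,I_n],[I_n,0]]. Then for sufficiently large θ, rank(γ'(θ) - iσ_{A,B}) - 2n = rank(Y - iΣ), where σ_{A,B} = σ_{2n} ⊕ σ_{2n}. -/
import Mathlib


open Matrix Complex ComplexOrder

/-- The standard symplectic form `[[0, I_n], [-I_n, 0]]` on `n` modes. -/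
def sympForm (n : ℕ) : Matrix (Fin n ⊕ Fin n) (Fin n ⊕ Fin n) ℝ :=
  Matrix.fromBlocks 0 1 (-1) 0

/-- The matrix `σ_x = [[0, I_n], [I_n, 0]]`. -/
def sigmaX (n : ℕ) : Matrix (Fin n ⊕ Fin n) (Fin n ⊕ Fin n) ℝ :=
  Matrix.fromBlocks 0 1 1 0

/- ### Auxiliary lemmas -/

lemma range_prodMap' {R M M₂ M₃ M₄ : Type*} [CommRing R]
    [AddCommGroup M] [AddCommGroup M₂] [AddCommGroup M₃] [AddCommGroup M₄]
    [Module R M] [Module R M₂] [Module R M₃] [Module R M₄]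
    (f : M →ₗ[R] M₂) (g : M₃ →ₗ[R] M₄) :
    LinearMap.range (f.prodMap g) = (LinearMap.range f).prod (LinearMap.range g) := by
  ext ⟨x, y⟩
  simp only [LinearMap.mem_range, Submodule.mem_prod, LinearMap.prodMap_apply, Prod.ext_iff,
    Prod.exists]
  constructor
  · rintro ⟨a, b, h1, h2⟩; exact ⟨⟨a, h1⟩, ⟨b, h2⟩⟩
  · rintro ⟨⟨a, h1⟩, ⟨b, h2⟩⟩; exact ⟨a, b, h1, h2⟩

/-- The product of submodules is linearly equivalent to the binary product. -/
def Submodule.prodLEquiv {R M N : Type*} [Ring R] [AddCommGroup M] [AddCommGroup N]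
    [Module R M] [Module R N] (p : Submodule R M) (q : Submodule R N) :
    (p.prod q) ≃ₗ[R] p × q where
  toFun x := (⟨x.1.1, x.2.1⟩, ⟨x.1.2, x.2.2⟩)
  invFun x := ⟨(x.1.1, x.2.1), x.1.2, x.2.2⟩
  map_add' _ _ := rfl
  map_smul' _ _ := rfl
  left_inv _ := rfl
  right_inv _ := rfl

/-- The rank of a block diagonal matrix is the sum of the ranks of the diagonal blocks. -/
lemma rank_fromBlocks_diag {K : Type*} [Field K] {m p : Type*} [Fintype m] [Fintype p]
    (A : Matrix m m K) (B : Matrix p p K) :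
    (Matrix.fromBlocks A 0 0 B).rank = A.rank + B.rank := by
  classical
  let e := LinearEquiv.sumArrowLequivProdArrow m p K K
  have hM : (Matrix.fromBlocks A 0 0 B).mulVecLin
      = e.symm.toLinearMap ∘ₗ (A.mulVecLin.prodMap B.mulVecLin) ∘ₗ e.toLinearMap := by
    apply LinearMap.ext; intro v
    funext i
    cases i <;>
      simp [e, Matrix.fromBlocks_mulVec, LinearEquiv.sumArrowLequivProdArrow,
        Equiv.sumArrowEquivProdArrow]
  rw [Matrix.rank, Matrix.rank, Matrix.rank, hM, LinearMap.range_comp,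
    LinearMap.range_comp_of_range_eq_top _ (LinearEquiv.range e),
    LinearEquiv.finrank_map_eq, range_prodMap',
    (Submodule.prodLEquiv _ _).finrank_eq, Module.finrank_prod]

lemma inv_key {R : Type*} [Ring R] [Algebra ℂ R] (s : R) (hs : s * s = -1)
    (θ : ℂ) (hθ : θ ^ 2 - 1 ≠ 0) :
    (θ • (1 : R) - Complex.I • s) * ((θ ^ 2 - 1)⁻¹ • (θ • (1 : R) + Complex.I • s)) = 1 ∧
    ((θ ^ 2 - 1)⁻¹ • (θ • (1 : R) + Complex.I • s)) * (θ • (1 : R) - Complex.I • s) = 1 := by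
  have key1 : (θ • (1 : R) - Complex.I • s) * (θ • (1 : R) + Complex.I • s)
      = (θ ^ 2 - 1) • 1 := by
    simp only [sub_mul, mul_add, add_mul, smul_mul_assoc, mul_smul_comm, smul_smul,
      one_mul, mul_one, hs, smul_neg, smul_sub, smul_add, neg_neg]
    rw [Complex.I_mul_I]
    module
  have key2 : (θ • (1 : R) + Complex.I • s) * (θ • (1 : R) - Complex.I • s)
      = (θ ^ 2 - 1) • 1 := by
    simp only [sub_mul, mul_sub, mul_add, add_mul, smul_mul_assoc, mul_smul_comm, smul_smul,
      one_mul, mul_one, hs, smul_neg, smul_sub, smul_add, neg_neg]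
    rw [Complex.I_mul_I]
    module
  constructor
  · rw [mul_smul_comm, key1, smul_smul, inv_mul_cancel₀ hθ, one_smul]
  · rw [smul_mul_assoc, key2, smul_smul, inv_mul_cancel₀ hθ, one_smul]

lemma schur_key {R : Type*} [Ring R] [Algebra ℂ R] (s x a b y : R)
    (hx2 : ∀ m : R, x * (x * m) = m) (hxs : ∀ m : R, x * (s * (x * m)) = -(s * m))
    (θ f : ℂ) (hf : f ^ 2 = θ ^ 2 - 1) (hθ : θ ^ 2 - 1 ≠ 0) :
    (θ • (a * b) + y - Complex.I • s) -
      (f • (a * x)) * ((θ ^ 2 - 1)⁻¹ • (θ • (1 : R) + Complex.I • s)) * (f • (x * b)) =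
    y - Complex.I • (s - a * (s * b)) := by
  have hmid : (a * x) * ((θ • (1 : R) + Complex.I • s) * (x * b))
      = θ • (a * b) + Complex.I • (-(a * (s * b))) := by
    simp only [mul_add, add_mul, smul_mul_assoc, mul_smul_comm, one_mul, mul_assoc, hx2, hxs,
      mul_neg]
  have hcollect :
      (f • (a * x)) * ((θ ^ 2 - 1)⁻¹ • (θ • (1 : R) + Complex.I • s)) * (f • (x * b))
      = (f * (θ ^ 2 - 1)⁻¹ * f) • ((a * x) * ((θ • (1 : R) + Complex.I • s) * (x * b))) := by
    simp only [smul_mul_assoc, mul_smul_comm, smul_smul, mul_assoc]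
  rw [hcollect, hmid]
  have hsc : f * (θ ^ 2 - 1)⁻¹ * f = 1 := by
    field_simp
    linear_combination hf
  rw [hsc, one_smul]
  module

lemma sympForm_sq (n : ℕ) : sympForm n * sympForm n = -1 := by
  simp [sympForm, Matrix.fromBlocks_multiply, ← Matrix.fromBlocks_one,
    Matrix.fromBlocks_neg]

lemma sigmaX_sq (n : ℕ) : sigmaX n * sigmaX n = 1 := by
  simp [sigmaX, Matrix.fromBlocks_multiply, ← Matrix.fromBlocks_one]

lemma sigmaX_symp (n : ℕ) : sigmaX n * (sympForm n * sigmaX n) = -(sympForm n) := by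
  simp [sigmaX, sympForm, Matrix.fromBlocks_multiply, Matrix.fromBlocks_neg]

section MapHelpers

variable {m p q : Type*} [Fintype p]

lemma mr_mul (A : Matrix m p ℝ) (B : Matrix p q ℝ) :
    (A * B).map Complex.ofReal = A.map Complex.ofReal * B.map Complex.ofReal := by
  ext i j; simp [Matrix.mul_apply, Matrix.map_apply]

lemma mr_smul (c : ℝ) (A : Matrix m q ℝ) :
    (c • A).map Complex.ofReal = (c : ℂ) • A.map Complex.ofReal := by
  ext i j; simp [Matrix.map_apply]

lemma mr_add (A B : Matrix m q ℝ) :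
    (A + B).map Complex.ofReal = A.map Complex.ofReal + B.map Complex.ofReal := by
  ext i j; simp [Matrix.map_apply]

lemma mr_sub (A B : Matrix m q ℝ) :
    (A - B).map Complex.ofReal = A.map Complex.ofReal - B.map Complex.ofReal := by
  ext i j; simp [Matrix.map_apply]

lemma mr_neg (A : Matrix m q ℝ) :
    (-A).map Complex.ofReal = -(A.map Complex.ofReal) := by
  ext i j; simp [Matrix.map_apply]

lemma mr_transpose (A : Matrix m q ℝ) :
    (Aᵀ).map Complex.ofReal = (A.map Complex.ofReal)ᵀ := by
  ext i j; simp [Matrix.map_apply]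

lemma mr_one [DecidableEq q] : (1 : Matrix q q ℝ).map Complex.ofReal = 1 := by
  ext i j; simp [Matrix.map_apply, Matrix.one_apply]; aesop

lemma mr_zero : (0 : Matrix m q ℝ).map Complex.ofReal = 0 := by
  ext i j; simp [Matrix.map_apply]

/-- Blockwise subtraction of block matrices. -/
lemma fromBlocks_sub' {l o α : Type*} [Sub α] (A A' : Matrix m q α) (B B' : Matrix m o α)
    (C C' : Matrix l q α) (D D' : Matrix l o α) :
    Matrix.fromBlocks A B C D - Matrix.fromBlocks A' B' C' D' =
      Matrix.fromBlocks (A - A') (B - B') (C - C') (D - D') := by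
  ext i j
  cases i <;> cases j <;> rfl

end MapHelpers

/-- The main rank computation, over `ℂ`, for abstract matrices satisfying the relevant
algebraic identities: the rank of the LDU-decomposable block matrix equals the rank of its
Schur complement plus the size of the (invertible) bottom-right block. -/
lemma main_calc {q : Type*} [Fintype q] [DecidableEq q]
    (Xc Yc sc xc : Matrix q q ℂ) (θc fc : ℂ)
    (hsc : sc * sc = -1)
    (hx2 : ∀ M : Matrix q q ℂ, xc * (xc * M) = M)
    (hxs : ∀ M : Matrix q q ℂ, xc * (sc * (xc * M)) = -(sc * M))
    (hfc2 : fc ^ 2 = θc ^ 2 - 1) (hθc : θc ^ 2 - 1 ≠ 0) :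
    (Matrix.fromBlocks (θc • (Xcᵀ * Xc) + Yc - Complex.I • sc)
        (fc • (Xcᵀ * xc)) (fc • (xc * Xc))
        (θc • (1 : Matrix q q ℂ) - Complex.I • sc)).rank
      = (Yc - Complex.I • (sc - Xcᵀ * (sc * Xc))).rank + Fintype.card q := by
  have hkey := inv_key sc hsc θc hθc
  set D : Matrix q q ℂ := θc • (1 : Matrix q q ℂ) - Complex.I • sc with hD
  letI instD : Invertible D :=
    ⟨(θc ^ 2 - 1)⁻¹ • (θc • 1 + Complex.I • sc), hkey.2, hkey.1⟩
  have hinv : ⅟D = (θc ^ 2 - 1)⁻¹ • (θc • 1 + Complex.I • sc) := rfl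
  rw [Matrix.fromBlocks_eq_of_invertible₂₂]
  have hU : IsUnit (Matrix.fromBlocks (1 : Matrix q q ℂ) ((fc • (Xcᵀ * xc)) * ⅟D) 0 1).det := by
    rw [Matrix.det_fromBlocks_zero₂₁]; simp
  have hV : IsUnit (Matrix.fromBlocks (1 : Matrix q q ℂ) 0 (⅟D * (fc • (xc * Xc))) 1).det := by
    rw [Matrix.det_fromBlocks_zero₁₂]; simp
  rw [Matrix.rank_mul_eq_left_of_isUnit_det _ _ hV,
    Matrix.rank_mul_eq_right_of_isUnit_det _ _ hU, rank_fromBlocks_diag]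
  have hS : (θc • (Xcᵀ * Xc) + Yc - Complex.I • sc) - (fc • (Xcᵀ * xc)) * ⅟D * (fc • (xc * Xc))
      = Yc - Complex.I • (sc - Xcᵀ * (sc * Xc)) := by
    rw [hinv]
    exact schur_key sc xc Xcᵀ Xc Yc hx2 hxs θc fc hfc2 hθc
  rw [hS, Matrix.rank_of_isUnit D (isUnit_of_invertible D)]

/-- With `Σ = σ - Xᵀ σ X`, `Y - iΣ` PSD, `f(θ) = -√(θ² - 1)` and
`γ'(θ) = [[θ XᵀX + Y, f(θ) Xᵀσ_x], [f(θ) σ_x X, θ I]]`, for all sufficiently large `θ`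
one has `rank(γ'(θ) - iσ_{A,B}) - 2n = rank(Y - iΣ)` (stated additively:
`rank(γ'(θ) - iσ_{A,B}) = 2n + rank(Y - iΣ)`), where `σ_{A,B} = σ_{2n} ⊕ σ_{2n}`. -/
theorem rank_CJ_state_large_theta (n : ℕ)
    (X Y : Matrix (Fin n ⊕ Fin n) (Fin n ⊕ Fin n) ℝ) (hY : Y.IsSymm)
    (h : ((Y.map Complex.ofReal) - Complex.I •
        ((sympForm n - Xᵀ * sympForm n * X).map Complex.ofReal)).PosSemidef) :
    ∃ θ₀ : ℝ, 1 < θ₀ ∧ ∀ θ : ℝ, θ₀ < θ →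
      ((Matrix.fromBlocks (θ • (Xᵀ * X) + Y)
            ((-Real.sqrt (θ ^ 2 - 1)) • (Xᵀ * sigmaX n))
            ((-Real.sqrt (θ ^ 2 - 1)) • (sigmaX n * X))
            (θ • (1 : Matrix (Fin n ⊕ Fin n) (Fin n ⊕ Fin n) ℝ))).map Complex.ofReal -
          Complex.I • ((Matrix.fromBlocks (sympForm n) 0 0 (sympForm n)).map
            Complex.ofReal)).rank =
        2 * n + ((Y.map Complex.ofReal) - Complex.I •
          ((sympForm n - Xᵀ * sympForm n * X).map Complex.ofReal)).rank := by
  refine ⟨2, one_lt_two, fun θ hθ => ?_⟩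
  have hθ1 : (1 : ℝ) < θ := by linarith
  have hpos : (0 : ℝ) < θ ^ 2 - 1 := by nlinarith
  have hfc2 : ((-Real.sqrt (θ ^ 2 - 1) : ℝ) : ℂ) ^ 2 = (θ : ℂ) ^ 2 - 1 := by
    have hr : (-Real.sqrt (θ ^ 2 - 1)) ^ 2 = θ ^ 2 - 1 := by
      rw [neg_pow, Real.sq_sqrt hpos.le]; ring
    calc ((-Real.sqrt (θ ^ 2 - 1) : ℝ) : ℂ) ^ 2
        = (((-Real.sqrt (θ ^ 2 - 1)) ^ 2 : ℝ) : ℂ) := by push_cast; ring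
      _ = (θ : ℂ) ^ 2 - 1 := by rw [hr]; push_cast; ring
  have hθc : (θ : ℂ) ^ 2 - 1 ≠ 0 := by
    have he : (θ : ℂ) ^ 2 - 1 = ((θ ^ 2 - 1 : ℝ) : ℂ) := by push_cast; ring
    rw [he]
    exact_mod_cast hpos.ne'
  have hsc : (sympForm n).map Complex.ofReal * (sympForm n).map Complex.ofReal = -1 := by
    rw [← mr_mul, sympForm_sq,
      show ((-1 : Matrix (Fin n ⊕ Fin n) (Fin n ⊕ Fin n) ℝ))
        = -(1 : Matrix (Fin n ⊕ Fin n) (Fin n ⊕ Fin n) ℝ) from rfl, mr_neg, mr_one]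
  have hx2 : ∀ M : Matrix (Fin n ⊕ Fin n) (Fin n ⊕ Fin n) ℂ,
      (sigmaX n).map Complex.ofReal * ((sigmaX n).map Complex.ofReal * M) = M := by
    intro M
    rw [← mul_assoc, ← mr_mul, sigmaX_sq, mr_one, one_mul]
  have hxs : ∀ M : Matrix (Fin n ⊕ Fin n) (Fin n ⊕ Fin n) ℂ,
      (sigmaX n).map Complex.ofReal * ((sympForm n).map Complex.ofReal *
        ((sigmaX n).map Complex.ofReal * M))
      = -((sympForm n).map Complex.ofReal * M) := by
    intro M
    rw [← mul_assoc ((sympForm n).map Complex.ofReal), ← mul_assoc,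
      ← mul_assoc ((sigmaX n).map Complex.ofReal),
      show (sigmaX n).map Complex.ofReal * (sympForm n).map Complex.ofReal *
          (sigmaX n).map Complex.ofReal = -((sympForm n).map Complex.ofReal) by
        rw [← mr_mul, ← mr_mul, mul_assoc, sigmaX_symp, mr_neg],
      neg_mul]
  have hM : ((Matrix.fromBlocks (θ • (Xᵀ * X) + Y)
            ((-Real.sqrt (θ ^ 2 - 1)) • (Xᵀ * sigmaX n))
            ((-Real.sqrt (θ ^ 2 - 1)) • (sigmaX n * X))
            (θ • (1 : Matrix (Fin n ⊕ Fin n) (Fin n ⊕ Fin n) ℝ))).map Complex.ofReal -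
          Complex.I • ((Matrix.fromBlocks (sympForm n) 0 0 (sympForm n)).map
            Complex.ofReal))
      = Matrix.fromBlocks
          ((θ : ℂ) • ((X.map Complex.ofReal)ᵀ * X.map Complex.ofReal) + Y.map Complex.ofReal
            - Complex.I • (sympForm n).map Complex.ofReal)
          (((-Real.sqrt (θ ^ 2 - 1) : ℝ) : ℂ) •
            ((X.map Complex.ofReal)ᵀ * (sigmaX n).map Complex.ofReal))
          (((-Real.sqrt (θ ^ 2 - 1) : ℝ) : ℂ) •
            ((sigmaX n).map Complex.ofReal * X.map Complex.ofReal))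
          ((θ : ℂ) • (1 : Matrix (Fin n ⊕ Fin n) (Fin n ⊕ Fin n) ℂ)
            - Complex.I • (sympForm n).map Complex.ofReal) := by
    rw [Matrix.fromBlocks_map, Matrix.fromBlocks_map, Matrix.fromBlocks_smul, fromBlocks_sub']
    simp only [mr_add, mr_smul, mr_mul, mr_transpose, mr_one, mr_zero, smul_zero, sub_zero]
  rw [hM, main_calc (X.map Complex.ofReal) (Y.map Complex.ofReal)
      ((sympForm n).map Complex.ofReal) ((sigmaX n).map Complex.ofReal)
      (θ : ℂ) ((-Real.sqrt (θ ^ 2 - 1) : ℝ) : ℂ) hsc hx2 hxs hfc2 hθc]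
  have hSig : (sympForm n - Xᵀ * sympForm n * X).map Complex.ofReal
      = (sympForm n).map Complex.ofReal -
        (X.map Complex.ofReal)ᵀ * ((sympForm n).map Complex.ofReal * X.map Complex.ofReal) := by
    rw [mr_sub, mr_mul, mr_mul, mr_transpose, mul_assoc]
  rw [hSig, add_comm, Fintype.card_sum, Fintype.card_fin, two_mul]
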